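/- Let T be a tree on [m] with depth-first walk X and height process H (in oDFS order), and let Q ⊂ ℤ⁺×ℤ⁺ be a finite pointset such that Q ∩ X = Q ∩ (H/2), where for a function f, S ∩ f := {(x,y) ∈ S : 0 < y ≤ f(x)}. Let k = |Q ∩ X| and let G^X and G^H be the graphs obtained from T by adding the surplus edges encoded by Q via the depth-first-walk correspondence and via the height-process correspondence respectively. Then the Gromov–Hausdorff distance between the metric spaces G^X and G^H (with graph distances) is at most k(||X - H/2|| + 2), where ||·|| is the supremum norm. -/

import Mathlib

open scoped Classical
noncomputable section

namespace RandomGraphs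

variable {n : ℕ}

/-- One step of ordered depth-first search (oDFS): the state is the pair
(stack of open vertices, set of explored vertices). The first vertex of the
stack is explored: it is removed and its unseen neighbors are prepended to the
stack in increasing order. -/
def dfsStep (G : SimpleGraph (Fin n)) :
    List (Fin n) × Finset (Fin n) → List (Fin n) × Finset (Fin n) :=
  fun st =>
    match st with
    | ([], A) => ([], A)
    | (v :: rest, A) =>
        (((G.neighborFinset v).filter
            (fun w => w ∉ A ∧ w ∉ (v :: rest))).sort (· ≤ ·) ++ rest,
          insert v A)

/-- The oDFS state at time `i`, started from the stack containing only vertex `0`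
(the vertex with smallest label). -/
def dfsState (G : SimpleGraph (Fin n)) (i : ℕ) :
    List (Fin n) × Finset (Fin n) :=
  (dfsStep G)^[i] ((List.finRange n).take 1, ∅)

/-- The stack `O_i` of open vertices at time `i`. -/
def stackAt (G : SimpleGraph (Fin n)) (i : ℕ) : List (Fin n) :=
  (dfsState G i).1

/-- The depth-first walk `X(i) = |O_i| - 1` of a connected graph. -/
def dfw (G : SimpleGraph (Fin n)) (i : ℕ) : ℕ :=
  (stackAt G i).length - 1

/-- The area `a(T) = Σ_{i=1}^{n-1} X(i)` of a tree. -/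
def area (G : SimpleGraph (Fin n)) : ℕ :=
  ∑ i ∈ Finset.Ico 1 n, dfw G i

/-- The set of (unordered) edges permitted by oDFS run on `T`: non-edges `uv`
of `T` such that both `u` and `v` lie in the stack `O_i` for some `i < n`. -/
def permittedSet (T : SimpleGraph (Fin n)) : Set (Sym2 (Fin n)) :=
  {e | ∃ u v : Fin n, e = s(u, v) ∧ u ≠ v ∧ ¬ T.Adj u v ∧
    ∃ i < n, u ∈ stackAt T i ∧ v ∈ stackAt T i}

/-- The set of neighbors of the currently explored vertex which have not been
seen before (these become new open vertices, and the corresponding edges are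
the tree edges discovered at time `i`). -/
def newNbrs (G : SimpleGraph (Fin n)) (i : ℕ) : Finset (Fin n) :=
  match dfsState G i with
  | ([], _) => ∅
  | (v :: rest, A) => (G.neighborFinset v).filter (fun w => w ∉ A ∧ w ∉ (v :: rest))

/-- The depth-first tree `T(G)` of a connected graph `G`: its edges join
the vertex explored at step `i` to each of its previously-unseen neighbors. -/
def dfTree (G : SimpleGraph (Fin n)) : SimpleGraph (Fin n) :=
  SimpleGraph.fromRel (fun u v =>
    ∃ i < n, (stackAt G i).head? = some u ∧ v ∈ newNbrs G i)


/-- The root of the DFS, i.e. the vertex with smallest label (when `n ≥ 1`). -/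
def rootOf : Option (Fin n) := (List.finRange n).head?

/-- The height process `H(i)` (in oDFS order): the graph distance from the
root to the vertex `v_i` explored at step `i`. -/
def hproc (G : SimpleGraph (Fin n)) (i : ℕ) : ℕ :=
  match (rootOf : Option (Fin n)), (stackAt G i).head? with
  | some r, some v => G.dist r v
  | _, _ => 0

/-- `Q ∩ X`: the points `(i,j)` of `Q` with `0 < j ≤ X(i)`. -/
def capX (T : SimpleGraph (Fin n)) (Q : Finset (ℕ × ℕ)) : Finset (ℕ × ℕ) :=
  Q.filter (fun q => 0 < q.2 ∧ q.2 ≤ dfw T q.1)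

/-- `Q ∩ (H/2)`: the points `(i,j)` of `Q` with `0 < 2j ≤ H(i)`. -/
def capH (T : SimpleGraph (Fin n)) (Q : Finset (ℕ × ℕ)) : Finset (ℕ × ℕ) :=
  Q.filter (fun q => 0 < q.2 ∧ 2 * q.2 ≤ hproc T q.1)

/-- The graph `G^X(T, Q)`: to the tree `T` we add, for each point
`(i,j) ∈ Q ∩ X`, an edge between the vertex `v_i` explored at step `i` and
the `j`-th vertex of the stack `O_i` counting from the bottom. -/
def GX (T : SimpleGraph (Fin n)) (Q : Finset (ℕ × ℕ)) : SimpleGraph (Fin n) :=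
  T ⊔ SimpleGraph.fromRel (fun u v =>
    ∃ q ∈ Q, 0 < q.2 ∧ q.2 ≤ dfw T q.1 ∧
      (stackAt T q.1).head? = some u ∧
      ((stackAt T q.1).reverse)[q.2 - 1]? = some v)

/-- The graph `G^H(T, Q)`: to the tree `T` we add, for each point
`(i,j) ∈ Q ∩ (H/2)`, an edge between the vertex `v_i` explored at step `i`
and the vertex at distance `2j - 1` from the root on the unique path from the
root to `v_i`. -/
def GH (T : SimpleGraph (Fin n)) (Q : Finset (ℕ × ℕ)) : SimpleGraph (Fin n) :=
  T ⊔ SimpleGraph.fromRel (fun u v =>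
    ∃ q ∈ Q, 0 < q.2 ∧ 2 * q.2 ≤ hproc T q.1 ∧
      (stackAt T q.1).head? = some u ∧
      ∃ r, (rootOf : Option (Fin n)) = some r ∧
        T.dist r v = 2 * q.2 - 1 ∧
        ∀ P : T.Walk r u, P.IsPath → v ∈ P.support)

/-- The metric space on the vertex set of a connected graph, with the graph
distance. -/
def graphMetric (G : SimpleGraph (Fin n)) (hG : G.Connected) :
    MetricSpace (Fin n) where
  dist u v := G.dist u v
  dist_self u := by simp
  dist_comm u v := by
    show ((G.dist u v : ℕ) : ℝ) = ((G.dist v u : ℕ) : ℝ)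
    exact_mod_cast G.dist_comm
  dist_triangle u v w := by
    show ((G.dist u w : ℕ) : ℝ) ≤ ((G.dist u v : ℕ) : ℝ) + ((G.dist v w : ℕ) : ℝ)
    exact_mod_cast hG.dist_triangle
  eq_of_dist_eq_zero {u v} h := by
    have h' : ((G.dist u v : ℕ) : ℝ) = 0 := h
    exact (hG.dist_eq_zero_iff).mp (by exact_mod_cast h')

/-- A connected graph on `Fin n` (`n ≥ 1`), viewed as a point of
Gromov–Hausdorff space. -/
def ghSpaceOfGraph [NeZero n] (G : SimpleGraph (Fin n)) (hG : G.Connected) :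
    GromovHausdorff.GHSpace :=
  letI := graphMetric G hG
  letI : Nonempty (Fin n) := ⟨0⟩
  GromovHausdorff.toGHSpace (Fin n)

/-- The supremum norm `‖X - H/2‖` of the difference between the depth-first
walk and half the height process. -/
def normXH (T : SimpleGraph (Fin n)) : ℝ :=
  ⨆ i : Fin n, |(dfw T (i : ℕ) : ℝ) - (hproc T (i : ℕ) : ℝ) / 2|

end RandomGraphs

/-!
Both graphs are `T` plus one surplus edge per point `(i, j)`, joining `v_i` to `wX`, the `j`-th
vertex from the bottom of the stack `O_i`, resp. to `wH`, the ancestor of `v_i` at depth `2j - 1`.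
When oDFS runs on a tree, the stack below `v_i` consists of children of ancestors of `v_i`, sorted
by depth, and when the ancestor at depth `d` was explored the stack held exactly those of depth
`≤ d`. Comparing `X` and `H` at the times the ancestors at depths `d - 1` and `d` were explored,
where `d` is the depth of `wX`, gives `|d - 2j| ≤ 2 ‖X - H/2‖`; as `wX` hangs off the ancestor at
depth `d - 1`, it is within `2 ‖X - H/2‖ + 1` of `wH` in `T`. Hence each surplus edge of one graph
is a path of length `≤ 2 ‖X - H/2‖ + 2` in the other, replacing the surplus edges on a geodesic
changes distances by at most `k (2 ‖X - H/2‖ + 1)`, and the Gromov–Hausdorff distance is at most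
half of this distortion.
-/

lemma List.succ_le_countP_le_and_countP_lt_le {α : Type*} (f : α → ℕ) {l : List α}
    (hl : l.Pairwise fun a b => f a ≤ f b) {k : ℕ} (hk : k < l.length) :
    k + 1 ≤ l.countP (f · ≤ f l[k]) ∧ l.countP (f · < f l[k]) ≤ k := by
  induction l generalizing k with
  | nil => simp at hk
  | cons a l ih =>
    obtain ⟨ha, hl⟩ := List.pairwise_cons.mp hl
    cases k with
    | zero =>
      have : l.countP (f · < f a) = 0 := List.countP_eq_zero.mpr fun x hx => by simpa using ha x hx
      simp [this]
    | succ k =>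
      have hk' : k < l.length := by simpa using hk
      obtain ⟨ih₁, ih₂⟩ := ih hl hk'
      have hak : f a ≤ f l[k] := ha _ (List.getElem_mem hk')
      simp only [List.getElem_cons_succ, List.countP_cons]
      constructor
      · simp only [hak, decide_true, if_true]; omega
      · split_ifs <;> omega

namespace SimpleGraph

variable {V : Type*} {G G' : SimpleGraph V}

lemma Connected.dist_le_sum_map_edges (hG : G.Connected) (f : Sym2 V → ℝ)
    (hf : ∀ u v, G'.Adj u v → (G.dist u v : ℝ) ≤ f s(u, v)) {a b : V} (p : G'.Walk a b) :
    (G.dist a b : ℝ) ≤ (p.edges.map f).sum := by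
  induction p with
  | nil => simp
  | cons h p ih =>
    rw [Walk.edges_cons, List.map_cons, List.sum_cons]
    calc _ ≤ (G.dist _ _ : ℝ) + G.dist _ _ := by exact_mod_cast hG.dist_triangle
      _ ≤ _ := add_le_add (hf _ _ h) ih

lemma Connected.dist_le_dist_add_of_adj (hG : G.Connected) (hG' : G'.Connected)
    (S : Finset (Sym2 V)) {c : ℝ} (hc : 0 ≤ c)
    (hadj : ∀ u v, G'.Adj u v → G.Adj u v ∨ (s(u, v) ∈ S ∧ (G.dist u v : ℝ) ≤ c + 1)) (a b : V) :
    (G.dist a b : ℝ) ≤ G'.dist a b + c * S.card := by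
  classical
  obtain ⟨p, hp, hlen⟩ := hG'.exists_path_of_dist a b
  let f : Sym2 V → ℝ := fun e => 1 + if e ∈ S then c else 0
  have hf : ∀ u v, G'.Adj u v → (G.dist u v : ℝ) ≤ f s(u, v) := by
    intro u v huv
    rcases hadj u v huv with h | ⟨hS, h⟩
    · rw [dist_eq_one_iff_adj.mpr h]
      simp only [f]
      split_ifs <;> push_cast <;> linarith
    · simp only [f, if_pos hS]; linarith
  -- a geodesic is a path, so it crosses each edge of `S` at most once
  have hnodup := hp.isTrail.edges_nodup
  calc (G.dist a b : ℝ) ≤ _ := hG.dist_le_sum_map_edges f hf p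
    _ = p.edges.toFinset.card + c * (p.edges.toFinset ∩ S).card := by
      rw [← List.sum_toFinset _ hnodup, Finset.sum_add_distrib, Finset.sum_ite_mem _ _ fun _ => c]
      simp [mul_comm]
    _ ≤ G'.dist a b + c * S.card := by
      rw [List.toFinset_card_of_nodup hnodup, Walk.length_edges, hlen]
      gcongr
      exact Finset.inter_subset_right

variable {H : SimpleGraph V} {r : V → V → Prop}

lemma Connected.dist_le_dist_sup_fromRel_add (hG : G.Connected) (hH : H.Connected) (hHG : H ≤ G)
    (S : Finset (Sym2 V)) {c : ℝ} (hc : 0 ≤ c)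
    (hr : ∀ u v, r u v → s(u, v) ∈ S ∧ (G.dist u v : ℝ) ≤ c + 1) (a b : V) :
    (G.dist a b : ℝ) ≤ (H ⊔ fromRel r).dist a b + c * S.card := by
  refine hG.dist_le_dist_add_of_adj (hH.mono le_sup_left) S hc (fun u v huv => ?_) a b
  rcases huv with huv | ⟨-, huv | huv⟩
  · exact Or.inl (hHG huv)
  · exact Or.inr (hr u v huv)
  · rw [Sym2.eq_swap, dist_comm]
    exact Or.inr (hr v u huv)

lemma Connected.dist_sup_fromRel_le (hH : H.Connected) {u w : V} (huw : r u w) (v : V) :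
    (H ⊔ fromRel r).dist u v ≤ 1 + H.dist w v := by
  have hle : (H ⊔ fromRel r).dist u w ≤ 1 := by
    by_cases h : u = w
    · simp [h]
    · exact (dist_eq_one_iff_adj.mpr (Or.inr ⟨h, Or.inl huw⟩)).le
  calc (H ⊔ fromRel r).dist u v ≤ (H ⊔ fromRel r).dist u w + (H ⊔ fromRel r).dist w v :=
        (hH.mono le_sup_left).dist_triangle
    _ ≤ 1 + H.dist w v := add_le_add hle ((hH w v).dist_anti le_sup_left)

lemma IsTree.length_eq_dist (hG : G.IsTree) {u v : V} {p : G.Walk u v} (hp : p.IsPath) :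
    p.length = G.dist u v := by
  obtain ⟨q, hq, hlen⟩ := hG.connected.exists_path_of_dist u v
  obtain ⟨_, -, huniq⟩ := hG.existsUnique_path u v
  rw [huniq p hp, ← huniq q hq, hlen]

lemma dist_le_sub_of_adj_succ {f : ℕ → V} {n : ℕ} (hf : ∀ i < n, G.Adj (f i) (f (i + 1)))
    {i j : ℕ} (hij : i ≤ j) (hj : j ≤ n) : G.dist (f i) (f j) ≤ j - i := by
  induction j, hij using Nat.le_induction with
  | base => simp
  | succ j hij ih =>
    have hadj := hf j (by omega)
    calc G.dist (f i) (f (j + 1)) ≤ G.dist (f i) (f j) + G.dist (f j) (f (j + 1)) :=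
          hadj.reachable.dist_triangle_right _
      _ ≤ j - i + 1 := add_le_add (ih (by omega)) (dist_eq_one_iff_adj.mpr hadj).le
      _ = j + 1 - i := by omega

lemma dist_le_abs_sub_of_adj_succ {f : ℕ → V} {n : ℕ} (hf : ∀ i < n, G.Adj (f i) (f (i + 1)))
    {i j : ℕ} (hi : i ≤ n) (hj : j ≤ n) : (G.dist (f i) (f j) : ℝ) ≤ |(i : ℝ) - j| := by
  wlog hij : i ≤ j generalizing i j
  · rw [dist_comm, abs_sub_comm]
    exact this hj hi (by omega)
  rw [abs_of_nonpos (by simpa using hij), neg_sub, ← Nat.cast_sub hij]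
  exact_mod_cast dist_le_sub_of_adj_succ hf hij hj

def walkOfSeq (f : ℕ → V) : (n : ℕ) → (∀ i < n, G.Adj (f i) (f (i + 1))) → G.Walk (f 0) (f n)
  | 0, _ => .nil
  | n + 1, hf => (walkOfSeq f n fun i hi => hf i (by omega)).concat (hf n (by omega))

lemma length_walkOfSeq (f : ℕ → V) (n : ℕ) (hf : ∀ i < n, G.Adj (f i) (f (i + 1))) :
    (walkOfSeq f n hf).length = n := by
  induction n with
  | zero => rfl
  | succ n ih => rw [walkOfSeq, Walk.length_concat, ih]

lemma support_walkOfSeq (f : ℕ → V) (n : ℕ) (hf : ∀ i < n, G.Adj (f i) (f (i + 1))) :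
    (walkOfSeq f n hf).support = (List.range (n + 1)).map f := by
  induction n with
  | zero => rfl
  | succ n ih => rw [walkOfSeq, Walk.support_concat, ih, List.range_succ (n := n + 1)]; simp

lemma mem_support_walkOfSeq {f : ℕ → V} {n : ℕ} {hf : ∀ i < n, G.Adj (f i) (f (i + 1))}
    {x : V} : x ∈ (walkOfSeq f n hf).support ↔ ∃ i ≤ n, f i = x := by
  simp [support_walkOfSeq]

structure IsGeodesicSeq (G : SimpleGraph V) (f : ℕ → V) (n : ℕ) : Prop where
  adj : ∀ i < n, G.Adj (f i) (f (i + 1))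
  dist_eq : ∀ i ≤ n, G.dist (f 0) (f i) = i

namespace IsGeodesicSeq

variable {f : ℕ → V} {n : ℕ}

lemma isPath_walkOfSeq (hf : G.IsGeodesicSeq f n) : (walkOfSeq f n hf.adj).IsPath := by
  rw [Walk.isPath_def, support_walkOfSeq]
  refine List.Nodup.map_on (fun i hi j hj hij => ?_) List.nodup_range
  rw [List.mem_range] at hi hj
  rw [← hf.dist_eq i (by omega), ← hf.dist_eq j (by omega), hij]

lemma mem_support_iff (hG : G.IsTree) (hf : G.IsGeodesicSeq f n) {p : G.Walk (f 0) (f n)}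
    (hp : p.IsPath) {x : V} : x ∈ p.support ↔ ∃ i ≤ n, f i = x := by
  obtain ⟨_, -, huniq⟩ := hG.existsUnique_path (f 0) (f n)
  rw [huniq p hp, ← huniq _ hf.isPath_walkOfSeq, mem_support_walkOfSeq]

lemma forall_isPath_mem_support_iff (hG : G.IsTree) (hf : G.IsGeodesicSeq f n) {r u v : V}
    (hr : f 0 = r) (hu : f n = u) {d : ℕ} (hd : d ≤ n) :
    (G.dist r v = d ∧ ∀ p : G.Walk r u, p.IsPath → v ∈ p.support) ↔ v = f d := by
  subst hr hu
  constructor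
  · rintro ⟨hdist, hmem⟩
    obtain ⟨i, hi, rfl⟩ := mem_support_walkOfSeq.mp (hmem _ hf.isPath_walkOfSeq)
    rw [hf.dist_eq i hi] at hdist
    rw [hdist]
  · rintro rfl
    exact ⟨hf.dist_eq d hd, fun p hp => (hf.mem_support_iff hG hp).mpr ⟨d, hd, rfl⟩⟩

lemma update (hf : G.IsGeodesicSeq f n) {k : ℕ} {w : V} (hk : 0 < k) (hkn : k ≤ n + 1)
    (hadj : G.Adj (f (k - 1)) w) (hw : G.dist (f 0) w = k) :
    G.IsGeodesicSeq (Function.update f k w) k := by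
  have hupd : ∀ i < k, Function.update f k w i = f i := fun i hi =>
    Function.update_of_ne (by omega) _ _
  constructor
  · intro i hi
    rw [hupd i hi]
    rcases Nat.lt_or_ge (i + 1) k with h | h
    · rw [hupd _ h]
      exact hf.adj i (by omega)
    · obtain rfl : i + 1 = k := by omega
      simpa using hadj
  · intro i hi
    rw [hupd 0 hk]
    rcases Nat.lt_or_ge i k with h | h
    · rw [hupd i h]
      exact hf.dist_eq i (by omega)
    · obtain rfl : i = k := by omega
      rwa [Function.update_self]

lemma dist_eq_add_one_of_adj (hG : G.IsTree) (hf : G.IsGeodesicSeq f n) {w : V}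
    (hadj : G.Adj (f n) w) (hw : ∀ i < n, f i ≠ w) : G.dist (f 0) w = n + 1 := by
  by_cases hmem : w ∈ (walkOfSeq f n hf.adj).support
  · obtain ⟨i, hi, rfl⟩ := mem_support_walkOfSeq.mp hmem
    rcases Nat.lt_or_ge i n with h | h
    · exact absurd rfl (hw i h)
    · obtain rfl : i = n := by omega
      exact absurd rfl hadj.ne
  · rw [← hG.length_eq_dist (hf.isPath_walkOfSeq.concat hmem hadj), Walk.length_concat,
      length_walkOfSeq]

end IsGeodesicSeq

end SimpleGraph

namespace RandomGraphs

open SimpleGraph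

lemma dist_ghSpaceOfGraph_le {n : ℕ} [NeZero n] {G G' : SimpleGraph (Fin n)} (hG : G.Connected)
    (hG' : G'.Connected) {ε : ℝ} (h : ∀ u v, |(G.dist u v : ℝ) - G'.dist u v| ≤ ε) :
    dist (ghSpaceOfGraph G hG) (ghSpaceOfGraph G' hG') ≤ ε / 2 := by
  have := @GromovHausdorff.ghDist_le_of_approx_subsets (Fin n) (graphMetric G hG) _ _
    (Fin n) (graphMetric G' hG') _ _ Set.univ Subtype.val 0 ε 0
    (fun x => ⟨x, trivial, (@dist_self _ (graphMetric G hG).toPseudoMetricSpace x).le⟩)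
    (fun y => ⟨⟨y, trivial⟩, (@dist_self _ (graphMetric G' hG').toPseudoMetricSpace y).le⟩)
    (fun x y => h x y)
  simp only [zero_add, add_zero] at this
  exact this

variable {m : ℕ} {T : SimpleGraph (Fin m)}

lemma dfsState_succ (T : SimpleGraph (Fin m)) (i : ℕ) :
    dfsState T (i + 1) = dfsStep T (dfsState T i) :=
  Function.iterate_succ_apply' _ _ _

lemma dfsState_succ_of_eq_cons {i : ℕ} {v : Fin m} {rest : List (Fin m)} {A : Finset (Fin m)}
    (h : dfsState T i = (v :: rest, A)) :
    dfsState T (i + 1) = ((newNbrs T i).sort (· ≤ ·) ++ rest, insert v A) := by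
  rw [dfsState_succ, h, newNbrs, h, dfsStep]

lemma mem_newNbrs_of_eq_cons {i : ℕ} {v w : Fin m} {rest : List (Fin m)} {A : Finset (Fin m)}
    (h : dfsState T i = (v :: rest, A)) :
    w ∈ newNbrs T i ↔ T.Adj v w ∧ w ∉ A ∧ w ∉ v :: rest := by
  rw [newNbrs, h, Finset.mem_filter, mem_neighborFinset]

lemma abs_dfw_sub_le_normXH (T : SimpleGraph (Fin m)) {t : ℕ} (ht : t < m) :
    |(dfw T t : ℝ) - (hproc T t : ℝ) / 2| ≤ normXH T :=
  le_ciSup (f := fun i : Fin m => |(dfw T i : ℝ) - (hproc T i : ℝ) / 2|)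
    (Set.finite_range _).bddAbove ⟨t, ht⟩

variable [NeZero m]

lemma rootOf_eq_some_zero : (rootOf : Option (Fin m)) = some 0 := by
  obtain ⟨k, rfl⟩ := Nat.exists_eq_succ_of_ne_zero (NeZero.ne m)
  simp [rootOf, List.finRange_succ]

lemma dfsState_zero : dfsState T 0 = ([0], ∅) := by
  obtain ⟨k, rfl⟩ := Nat.exists_eq_succ_of_ne_zero (NeZero.ne m)
  simp [dfsState, List.finRange_succ]

lemma hproc_eq_dist {i : ℕ} {u : Fin m} (h : (stackAt T i).head? = some u) :
    hproc T i = T.dist 0 u := by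
  rw [hproc, rootOf_eq_some_zero, h]

lemma normXH_nonneg (T : SimpleGraph (Fin m)) : 0 ≤ normXH T :=
  (abs_nonneg _).trans (abs_dfw_sub_le_normXH T (Nat.pos_of_ne_zero (NeZero.ne m)))

/-- oDFS on a tree at time `i`, with stack `v :: rest` and explored set `A`: `pa d` is the ancestor
of `v` at depth `d`, and `history` records when `pa d` was explored and the stack height then. -/
structure DfsInv (T : SimpleGraph (Fin m)) (i : ℕ) (v : Fin m) (rest : List (Fin m))
    (A : Finset (Fin m)) (pa : ℕ → Fin m) : Prop where
  nodup : (v :: rest).Nodup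
  notMem : ∀ w ∈ v :: rest, w ∉ A
  card_eq : A.card = i
  root : pa 0 = 0
  last : pa (T.dist 0 v) = v
  geodesic : T.IsGeodesicSeq pa (T.dist 0 v)
  ancestor_mem : ∀ d < T.dist 0 v, pa d ∈ A
  rest_adj : ∀ w ∈ rest,
    0 < T.dist 0 w ∧ T.dist 0 w ≤ T.dist 0 v ∧ T.Adj (pa (T.dist 0 w - 1)) w
  sorted : rest.Pairwise fun a b => T.dist 0 b ≤ T.dist 0 a
  history : ∀ d ≤ T.dist 0 v, ∃ t ≤ i,
    (stackAt T t).head? = some (pa d) ∧ (stackAt T t).length = 1 + rest.countP (T.dist 0 · ≤ d)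

lemma dfsInv_zero : DfsInv T 0 0 [] ∅ fun _ => 0 where
  nodup := List.nodup_singleton _
  notMem := by simp
  card_eq := rfl
  root := rfl
  last := rfl
  geodesic := ⟨by simp, by simp⟩
  ancestor_mem := by simp
  rest_adj := by simp
  sorted := List.Pairwise.nil
  history d hd := ⟨0, le_rfl, by simp [stackAt, dfsState_zero]⟩

namespace DfsInv

variable {i : ℕ} {v : Fin m} {rest : List (Fin m)} {A : Finset (Fin m)} {pa : ℕ → Fin m}

lemma time_lt (h : DfsInv T i v rest A pa) : i < m := by
  simpa [h.card_eq] using Finset.card_lt_univ_of_notMem (h.notMem v List.mem_cons_self)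

lemma dist_pa (h : DfsInv T i v rest A pa) {d : ℕ} (hd : d ≤ T.dist 0 v) :
    T.dist 0 (pa d) = d := by
  simpa [h.root] using h.geodesic.dist_eq d hd

lemma dist_newNbrs (hT : T.IsTree) (h : DfsInv T i v rest A pa)
    (hs : dfsState T i = (v :: rest, A)) {w : Fin m} (hw : w ∈ newNbrs T i) :
    T.dist 0 w = T.dist 0 v + 1 := by
  obtain ⟨hadj, hwA, -⟩ := (mem_newNbrs_of_eq_cons hs).mp hw
  have := h.geodesic.dist_eq_add_one_of_adj hT (by rwa [h.last]) fun d hd (hdw : pa d = w) =>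
    hwA (hdw ▸ h.ancestor_mem d hd)
  rwa [h.root] at this

lemma adj_of_mem_newStack (hT : T.IsTree) (h : DfsInv T i v rest A pa)
    (hs : dfsState T i = (v :: rest, A)) :
    ∀ w ∈ (newNbrs T i).sort (· ≤ ·) ++ rest,
      0 < T.dist 0 w ∧ T.dist 0 w ≤ T.dist 0 v + 1 ∧ T.Adj (pa (T.dist 0 w - 1)) w := by
  intro w hw
  rcases List.mem_append.mp hw with hw | hw
  · rw [Finset.mem_sort] at hw
    rw [h.dist_newNbrs hT hs hw, Nat.add_sub_cancel, h.last]
    exact ⟨by omega, le_rfl, ((mem_newNbrs_of_eq_cons hs).mp hw).1⟩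
  · obtain ⟨hpos, hle, hadj⟩ := h.rest_adj w hw
    exact ⟨hpos, by omega, hadj⟩

lemma pairwise_newStack (hT : T.IsTree) (h : DfsInv T i v rest A pa)
    (hs : dfsState T i = (v :: rest, A)) :
    ((newNbrs T i).sort (· ≤ ·) ++ rest).Pairwise fun a b => T.dist 0 b ≤ T.dist 0 a := by
  have hnew : ∀ w ∈ (newNbrs T i).sort (· ≤ ·), T.dist 0 w = T.dist 0 v + 1 := fun w hw =>
    h.dist_newNbrs hT hs ((Finset.mem_sort _).mp hw)
  refine List.pairwise_append.mpr ⟨?_, h.sorted, fun a ha b hb => ?_⟩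
  · exact List.pairwise_of_forall_mem_list fun a ha b hb => by rw [hnew a ha, hnew b hb]
  · rw [hnew a ha]
    exact (h.rest_adj b hb).2.1.trans (Nat.le_succ _)

lemma nodup_newStack (h : DfsInv T i v rest A pa) (hs : dfsState T i = (v :: rest, A)) :
    ((newNbrs T i).sort (· ≤ ·) ++ rest).Nodup := by
  refine (Finset.sort_nodup _ _).append (List.nodup_cons.mp h.nodup).2 fun w hw hw' => ?_
  exact ((mem_newNbrs_of_eq_cons hs).mp ((Finset.mem_sort _).mp hw)).2.2
    (List.mem_cons_of_mem _ hw')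

lemma notMem_insert_of_mem_newStack (h : DfsInv T i v rest A pa)
    (hs : dfsState T i = (v :: rest, A)) :
    ∀ w ∈ (newNbrs T i).sort (· ≤ ·) ++ rest, w ∉ insert v A := by
  intro w hw
  rw [Finset.mem_insert, not_or]
  rcases List.mem_append.mp hw with hw | hw
  · obtain ⟨-, hwA, hwv⟩ := (mem_newNbrs_of_eq_cons hs).mp ((Finset.mem_sort _).mp hw)
    exact ⟨fun hwv' => hwv (hwv' ▸ List.mem_cons_self), hwA⟩
  · exact ⟨fun hwv => (List.nodup_cons.mp h.nodup).1 (hwv ▸ hw),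
      h.notMem w (List.mem_cons_of_mem _ hw)⟩

lemma countP_newStack (hT : T.IsTree) (h : DfsInv T i v rest A pa)
    (hs : dfsState T i = (v :: rest, A)) {d : ℕ} (hd : d ≤ T.dist 0 v) :
    ((newNbrs T i).sort (· ≤ ·) ++ rest).countP (T.dist 0 · ≤ d) =
      rest.countP (T.dist 0 · ≤ d) := by
  rw [List.countP_append, List.countP_eq_zero.mpr, zero_add]
  intro w hw
  rw [h.dist_newNbrs hT hs ((Finset.mem_sort _).mp hw)]
  simpa using by omega

lemma history_succ (hT : T.IsTree) (h : DfsInv T i v rest A pa)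
    (hs : dfsState T i = (v :: rest, A)) {v' : Fin m} {rest' : List (Fin m)}
    (hS : (newNbrs T i).sort (· ≤ ·) ++ rest = v' :: rest')
    (hstack : stackAt T (i + 1) = v' :: rest') (hrest' : ∀ w ∈ rest', T.dist 0 w ≤ T.dist 0 v')
    (hv' : T.dist 0 v' ≤ T.dist 0 v + 1) :
    ∀ d ≤ T.dist 0 v', ∃ t ≤ i + 1,
      (stackAt T t).head? = some (Function.update pa (T.dist 0 v') v' d) ∧
      (stackAt T t).length = 1 + rest'.countP (T.dist 0 · ≤ d) := by
  intro d hd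
  rcases Nat.lt_or_ge d (T.dist 0 v') with hdk | hdk
  · obtain ⟨t, ht, hhead, hlen⟩ := h.history d (by omega)
    refine ⟨t, by omega, by rwa [Function.update_of_ne hdk.ne], ?_⟩
    rw [hlen, ← h.countP_newStack hT hs (by omega), hS, List.countP_cons_of_neg (by simpa)]
  · obtain rfl : d = T.dist 0 v' := by omega
    refine ⟨i + 1, le_rfl, by simp [hstack], ?_⟩
    rw [hstack, List.countP_eq_length.mpr fun w hw => by simpa using hrest' w hw]
    simp [Nat.add_comm]

lemma succ (hT : T.IsTree) (h : DfsInv T i v rest A pa) (hs : dfsState T i = (v :: rest, A))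
    {v' : Fin m} {rest' : List (Fin m)} {A' : Finset (Fin m)}
    (hs' : dfsState T (i + 1) = (v' :: rest', A')) :
    DfsInv T (i + 1) v' rest' A' (Function.update pa (T.dist 0 v') v') := by
  have hstack : stackAt T (i + 1) = v' :: rest' := by rw [stackAt, hs']
  rw [dfsState_succ_of_eq_cons hs, Prod.mk.injEq] at hs'
  obtain ⟨hS, rfl⟩ := hs'
  have hadj := h.adj_of_mem_newStack hT hs
  have hsorted := h.pairwise_newStack hT hs
  rw [hS] at hadj hsorted
  rw [List.pairwise_cons] at hsorted
  obtain ⟨hk0, hkv, hadjv'⟩ := hadj v' List.mem_cons_self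
  have hupd : ∀ d < T.dist 0 v', Function.update pa (T.dist 0 v') v' d = pa d :=
    fun d hd => Function.update_of_ne hd.ne _ _
  refine
    { nodup := hS ▸ h.nodup_newStack hs
      notMem := hS ▸ h.notMem_insert_of_mem_newStack hs
      card_eq := by rw [Finset.card_insert_of_notMem (h.notMem v List.mem_cons_self), h.card_eq]
      root := by rw [hupd 0 hk0, h.root]
      last := Function.update_self ..
      geodesic := h.geodesic.update hk0 hkv hadjv' (by rw [h.root])
      ancestor_mem := fun d hd => ?_
      rest_adj := fun w hw => ?_
      sorted := hsorted.2
      history := h.history_succ hT hs hS hstack hsorted.1 hkv }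
  · rw [hupd d hd]
    rcases Nat.lt_or_ge d (T.dist 0 v) with hdv | hdv
    · exact Finset.mem_insert_of_mem (h.ancestor_mem d hdv)
    · obtain rfl : d = T.dist 0 v := by omega
      rw [h.last]
      exact Finset.mem_insert_self _ _
  · obtain ⟨hpos, -, hadjw⟩ := hadj w (List.mem_cons_of_mem _ hw)
    have hle := hsorted.1 w hw
    exact ⟨hpos, hle, by rwa [hupd _ (by omega)]⟩

lemma abs_countP_sub_le (h : DfsInv T i v rest A pa) {d : ℕ} (hd : d ≤ T.dist 0 v) :
    |(rest.countP (T.dist 0 · ≤ d) : ℝ) - d / 2| ≤ normXH T := by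
  obtain ⟨t, ht, hhead, hlen⟩ := h.history d hd
  have := abs_dfw_sub_le_normXH T (ht.trans_lt h.time_lt)
  rwa [dfw, hlen, Nat.add_sub_cancel_left, hproc_eq_dist hhead, h.dist_pa hd] at this

lemma abs_dist_sub_le (h : DfsInv T i v rest A pa) {k : ℕ} (hk : k < rest.reverse.length) :
    |(T.dist 0 rest.reverse[k] : ℝ) - 2 * (k + 1)| ≤ 2 * normXH T := by
  obtain ⟨hd0, hdv, -⟩ := h.rest_adj _ (List.mem_reverse.mp (List.getElem_mem hk))
  obtain ⟨hle, hlt⟩ := List.succ_le_countP_le_and_countP_lt_le (T.dist 0)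
    (List.pairwise_reverse.mpr h.sorted) hk
  rw [List.countP_reverse] at hle hlt
  generalize T.dist 0 rest.reverse[k] = d at hd0 hdv hle hlt ⊢
  have hlt' : rest.countP (T.dist 0 · ≤ d - 1) ≤ k := by
    rwa [List.countP_congr (q := (T.dist 0 · < d)) fun w _ => by
      simp only [decide_eq_true_eq]; omega]
  have h₁ := h.abs_countP_sub_le hdv
  have h₂ := h.abs_countP_sub_le (d := d - 1) (by omega)
  rw [Nat.cast_pred hd0] at h₂
  have hle' : (k : ℝ) + 1 ≤ rest.countP (T.dist 0 · ≤ d) := by exact_mod_cast hle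
  have hlt'' : (rest.countP (T.dist 0 · ≤ d - 1) : ℝ) ≤ k := by exact_mod_cast hlt'
  rw [abs_le] at h₁ h₂ ⊢
  constructor <;> linarith [h₁.1, h₁.2, h₂.1, h₂.2]

end DfsInv

theorem exists_dfsInv (hT : T.IsTree) :
    ∀ (i : ℕ) {v : Fin m} {rest : List (Fin m)} {A : Finset (Fin m)},
      dfsState T i = (v :: rest, A) → ∃ pa, DfsInv T i v rest A pa
  | 0, v, rest, A, hs => by
    rw [dfsState_zero, Prod.mk.injEq, List.cons_eq_cons] at hs
    obtain ⟨⟨rfl, rfl⟩, rfl⟩ := hs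
    exact ⟨_, dfsInv_zero⟩
  | i + 1, v, rest, A, hs => by
    rcases hprev : dfsState T i with ⟨_ | ⟨v₀, rest₀⟩, A₀⟩
    · rw [dfsState_succ, hprev, dfsStep] at hs
      simp at hs
    · obtain ⟨pa, hpa⟩ := exists_dfsInv hT i hprev
      exact ⟨_, hpa.succ hT hprev hs⟩

def IsAncestorAt (T : SimpleGraph (Fin m)) (u : Fin m) (d : ℕ) (v : Fin m) : Prop :=
  T.dist 0 v = d ∧ ∀ P : T.Walk 0 u, P.IsPath → v ∈ P.support

theorem exists_stack_bottom_ancestor_dist_le (hT : T.IsTree) {i j : ℕ} {u : Fin m}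
    (hu : (stackAt T i).head? = some u) (hj : 0 < j) (hjX : j ≤ dfw T i)
    (hjH : 2 * j ≤ hproc T i) :
    ∃ wX wH, (stackAt T i).reverse[j - 1]? = some wX ∧
      (∀ v, IsAncestorAt T u (2 * j - 1) v ↔ v = wH) ∧
      (T.dist wX wH : ℝ) ≤ 2 * normXH T + 1 := by
  obtain ⟨rest, hstack⟩ := List.head?_eq_some_iff.mp hu
  obtain ⟨pa, h⟩ := exists_dfsInv hT i (A := (dfsState T i).2) (by rw [← hstack]; rfl)
  rw [dfw, hstack, List.length_cons, Nat.add_sub_cancel] at hjX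
  rw [hproc_eq_dist hu] at hjH
  have hk : j - 1 < rest.reverse.length := by rw [List.length_reverse]; omega
  set wX := rest.reverse[j - 1]
  obtain ⟨hd0, hdv, hadjX⟩ := h.rest_adj wX (List.mem_reverse.mp (List.getElem_mem hk))
  have habs := h.abs_dist_sub_le hk
  rw [Nat.cast_pred hj, sub_add_cancel] at habs
  refine ⟨wX, pa (2 * j - 1), ?_, fun v => h.geodesic.forall_isPath_mem_support_iff hT h.root
    h.last (by omega), ?_⟩
  · rw [hstack, List.reverse_cons, List.getElem?_append_left hk, List.getElem?_eq_getElem hk]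
  calc (T.dist wX (pa (2 * j - 1)) : ℝ)
      ≤ T.dist wX (pa (T.dist 0 wX - 1)) + T.dist (pa (T.dist 0 wX - 1)) (pa (2 * j - 1)) := by
        exact_mod_cast hadjX.symm.reachable.dist_triangle_left _
    _ ≤ 1 + |((T.dist 0 wX - 1 : ℕ) : ℝ) - (2 * j - 1 : ℕ)| := by
        gcongr
        · rw [dist_eq_one_iff_adj.mpr hadjX.symm, Nat.cast_one]
        · exact dist_le_abs_sub_of_adj_succ h.geodesic.adj (by omega) (by omega)
    _ ≤ 2 * normXH T + 1 := by
        rw [Nat.cast_sub (by omega), Nat.cast_sub (by omega), sub_sub_sub_cancel_right]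
        push_cast
        linarith

variable {Q : Finset (ℕ × ℕ)}

-- The defaults (`getD 0`, and `Classical.epsilon` of a possibly empty predicate) never matter:
-- these edges are only taken at points of `capX T Q = capH T Q`, where the stack is nonempty and
-- the vertex in question exists.
def surplusEdgeX (T : SimpleGraph (Fin m)) (q : ℕ × ℕ) : Sym2 (Fin m) :=
  s(((stackAt T q.1).head?).getD 0, ((stackAt T q.1).reverse[q.2 - 1]?).getD 0)

def surplusEdgeH (T : SimpleGraph (Fin m)) (q : ℕ × ℕ) : Sym2 (Fin m) :=
  s(((stackAt T q.1).head?).getD 0,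
    Classical.epsilon (IsAncestorAt T (((stackAt T q.1).head?).getD 0) (2 * q.2 - 1)))

lemma surplusEdgeX_mem_and_dist_GH_le (hT : T.IsTree) (hQ : capX T Q = capH T Q) {u v : Fin m}
    (h : ∃ q ∈ Q, 0 < q.2 ∧ q.2 ≤ dfw T q.1 ∧ (stackAt T q.1).head? = some u ∧
      ((stackAt T q.1).reverse)[q.2 - 1]? = some v) :
    s(u, v) ∈ (capX T Q).image (surplusEdgeX T) ∧
      ((GH T Q).dist u v : ℝ) ≤ 2 * normXH T + 2 := by
  obtain ⟨q, hq, hj, hjX, hu, hv⟩ := h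
  have hqX : q ∈ capX T Q := Finset.mem_filter.mpr ⟨hq, hj, hjX⟩
  have hjH : 2 * q.2 ≤ hproc T q.1 := (Finset.mem_filter.mp (hQ ▸ hqX)).2.2
  obtain ⟨wX, wH, hwX, hwH, hdist⟩ := exists_stack_bottom_ancestor_dist_le hT hu hj hjX hjH
  obtain rfl : v = wX := Option.some.inj (hv.symm.trans hwX)
  refine ⟨Finset.mem_image.mpr ⟨q, hqX, by simp [surplusEdgeX, hu, hv]⟩, ?_⟩
  have : (GH T Q).dist u v ≤ 1 + T.dist wH v := hT.connected.dist_sup_fromRel_le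
    ⟨q, hq, hj, hjH, hu, 0, rootOf_eq_some_zero, (hwH wH).mpr rfl⟩ v
  rw [dist_comm (u := wH)] at this
  have : ((GH T Q).dist u v : ℝ) ≤ 1 + T.dist v wH := by exact_mod_cast this
  linarith

lemma surplusEdgeH_mem_and_dist_GX_le (hT : T.IsTree) (hQ : capX T Q = capH T Q) {u v : Fin m}
    (h : ∃ q ∈ Q, 0 < q.2 ∧ 2 * q.2 ≤ hproc T q.1 ∧ (stackAt T q.1).head? = some u ∧
      ∃ r, (rootOf : Option (Fin m)) = some r ∧ T.dist r v = 2 * q.2 - 1 ∧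
        ∀ P : T.Walk r u, P.IsPath → v ∈ P.support) :
    s(u, v) ∈ (capH T Q).image (surplusEdgeH T) ∧
      ((GX T Q).dist u v : ℝ) ≤ 2 * normXH T + 2 := by
  obtain ⟨q, hq, hj, hjH, hu, r, hr, hv⟩ := h
  obtain rfl : r = 0 := Option.some.inj (hr.symm.trans rootOf_eq_some_zero)
  have hqH : q ∈ capH T Q := Finset.mem_filter.mpr ⟨hq, hj, hjH⟩
  have hjX : q.2 ≤ dfw T q.1 := (Finset.mem_filter.mp (hQ ▸ hqH)).2.2
  obtain ⟨wX, wH, hwX, hwH, hdist⟩ := exists_stack_bottom_ancestor_dist_le hT hu hj hjX hjH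
  obtain rfl : v = wH := (hwH v).mp hv
  have heps : Classical.epsilon (IsAncestorAt T u (2 * q.2 - 1)) = v :=
    (hwH _).mp (Classical.epsilon_spec ⟨v, hv⟩)
  refine ⟨Finset.mem_image.mpr ⟨q, hqH, by simp [surplusEdgeH, hu, heps]⟩, ?_⟩
  have : (GX T Q).dist u v ≤ 1 + T.dist wX v :=
    hT.connected.dist_sup_fromRel_le ⟨q, hq, hj, hjX, hu, hwX⟩ v
  have : ((GX T Q).dist u v : ℝ) ≤ 1 + T.dist wX v := by exact_mod_cast this
  linarith

lemma dist_GH_le_dist_GX_add (hT : T.IsTree) (hQ : capX T Q = capH T Q) (a b : Fin m) :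
    ((GH T Q).dist a b : ℝ) ≤ (GX T Q).dist a b + (2 * normXH T + 1) * (capX T Q).card := by
  have hN := normXH_nonneg T
  have : ((GH T Q).dist a b : ℝ) ≤ (GX T Q).dist a b +
      (2 * normXH T + 1) * ((capX T Q).image (surplusEdgeX T)).card :=
    (hT.connected.mono le_sup_left : (GH T Q).Connected).dist_le_dist_sup_fromRel_add
      hT.connected le_sup_left _ (by linarith)
      (fun u v h => (surplusEdgeX_mem_and_dist_GH_le hT hQ h).imp_right fun hd => by linarith) a b
  exact this.trans (by gcongr; exact Finset.card_image_le)

lemma dist_GX_le_dist_GH_add (hT : T.IsTree) (hQ : capX T Q = capH T Q) (a b : Fin m) :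
    ((GX T Q).dist a b : ℝ) ≤ (GH T Q).dist a b + (2 * normXH T + 1) * (capX T Q).card := by
  have hN := normXH_nonneg T
  have : ((GX T Q).dist a b : ℝ) ≤ (GH T Q).dist a b +
      (2 * normXH T + 1) * ((capH T Q).image (surplusEdgeH T)).card :=
    (hT.connected.mono le_sup_left : (GX T Q).Connected).dist_le_dist_sup_fromRel_add
      hT.connected le_sup_left _ (by linarith)
      (fun u v h => (surplusEdgeH_mem_and_dist_GX_le hT hQ h).imp_right fun hd => by linarith) a b
  exact this.trans (by gcongr; rw [hQ]; exact Finset.card_image_le)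

end RandomGraphs

open RandomGraphs in
/-- Let `T` be a tree on `[m]` with depth-first walk `X` and
height process `H`, and let `Q` be a finite pointset with
`Q ∩ X = Q ∩ (H/2)`, of cardinality `k`.  Then the Gromov–Hausdorff distance
between the graphs `G^X(T,Q)` and `G^H(T,Q)` (equipped with their graph
distances) is at most `k (‖X - H/2‖ + 2)`. -/
theorem ghDist_GX_GH_le (m : ℕ) [NeZero m]
    (T : SimpleGraph (Fin m)) (hT : T.IsTree) (Q : Finset (ℕ × ℕ))
    (hQ : capX T Q = capH T Q) (k : ℕ) (hk : k = (capX T Q).card) :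
    dist (ghSpaceOfGraph (GX T Q) (hT.isConnected.mono le_sup_left))
        (ghSpaceOfGraph (GH T Q) (hT.isConnected.mono le_sup_left))
      ≤ (k : ℝ) * (normXH T + 2) := by
  subst hk
  have hN := normXH_nonneg T
  calc _ ≤ (2 * normXH T + 1) * (capX T Q).card / 2 :=
        dist_ghSpaceOfGraph_le _ _ fun a b => abs_sub_le_iff.mpr
          ⟨by linarith [dist_GX_le_dist_GH_add hT hQ a b],
            by linarith [dist_GH_le_dist_GX_add hT hQ a b]⟩
    _ ≤ (capX T Q).card * (normXH T + 2) := by nlinarith
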